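/- Let p be a prime with p ≡ 13 (mod 15). If A, B ∈ ℤ satisfy N_3(4 + 3X + 5(AX + B)) = p, then M_15(1 − X⁵ − X¹¹ + X¹² + X³(1 + X³ + X⁶) + (1 − X)·Φ₅(X)·Φ₁₅(X)·(AX + B)) = 9p. If C, D ∈ ℤ satisfy N_3(3 − X + 5(X − 1)(CX + D)) = p, then M_15(1 + X³ + X⁶ + X⁹ + X¹⁴ + (X − 1)·Φ₅(X)·Φ₁₅(X)·(CX + D)) = 25p. -/
import Mathlib


open Polynomial

/-- `Mnorm n F` is the product of `F` over all `n`-th roots of unity in `ℂ`. -/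
noncomputable def Mnorm (n : ℕ) (F : Polynomial ℤ) : ℂ :=
  ∏ j ∈ Finset.range n,
    Polynomial.aeval (Complex.exp (2 * ↑Real.pi * Complex.I * (j : ℂ) / (n : ℂ))) F

/-- `Nnorm d F` is the product of `F` over the primitive `d`-th roots of unity in `ℂ`. -/
noncomputable def Nnorm (d : ℕ) (F : Polynomial ℤ) : ℂ :=
  ∏ j ∈ (Finset.range d).filter (fun j => Nat.gcd j d = 1),
    Polynomial.aeval (Complex.exp (2 * ↑Real.pi * Complex.I * (j : ℂ) / (d : ℂ))) F

/-- The fifth cyclotomic polynomial. -/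
noncomputable def Phi5 : Polynomial ℤ := X ^ 4 + X ^ 3 + X ^ 2 + X + 1

/-- The fifteenth cyclotomic polynomial. -/
noncomputable def Phi15 : Polynomial ℤ := X ^ 8 - X ^ 7 + X ^ 5 - X ^ 4 + X ^ 3 - X + 1

set_option maxHeartbeats 2000000 in
theorem stmt16 (p : ℕ) (hp : Nat.Prime p) (hmod : p % 15 = 13) :
    (∀ A B : ℤ,
      Nnorm 3 (Polynomial.C 4 + Polynomial.C 3 * X
          + Polynomial.C 5 * (Polynomial.C A * X + Polynomial.C B)) = (p : ℂ) →
      Mnorm 15 (1 - X ^ 5 - X ^ 11 + X ^ 12 + X ^ 3 * (1 + X ^ 3 + X ^ 6)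
          + (1 - X) * Phi5 * Phi15 * (Polynomial.C A * X + Polynomial.C B))
        = 9 * (p : ℂ)) ∧
    (∀ c d : ℤ,
      Nnorm 3 (Polynomial.C 3 - X
          + Polynomial.C 5 * (X - 1) * (Polynomial.C c * X + Polynomial.C d)) = (p : ℂ) →
      Mnorm 15 (1 + X ^ 3 + X ^ 6 + X ^ 9 + X ^ 14
          + (X - 1) * Phi5 * Phi15 * (Polynomial.C c * X + Polynomial.C d))
        = 25 * (p : ℂ)) := by
  obtain ⟨z, hz⟩ : ∃ w : ℂ, w = Complex.exp (2 * ↑Real.pi * Complex.I / ((15:ℕ):ℂ)) := ⟨_, rfl⟩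
  have hprim : IsPrimitiveRoot z 15 := by
    rw [hz]; exact Complex.isPrimitiveRoot_exp 15 (by norm_num)
  have h15 : z ^ 15 = 1 := hprim.pow_eq_one
  have h5ne : z ^ 5 ≠ 1 := hprim.pow_ne_one_of_pos_of_lt (by norm_num) (by norm_num)
  have h3ne : z ^ 3 ≠ 1 := hprim.pow_ne_one_of_pos_of_lt (by norm_num) (by norm_num)
  have eq1 : ∀ j : ℕ, Complex.exp (2 * ↑Real.pi * Complex.I * (j:ℂ) / ((15:ℕ):ℂ)) = z ^ j := by
    intro j; rw [hz, ← Complex.exp_nat_mul]; congr 1; push_cast; ring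
  have eq3 : ∀ j : ℕ, Complex.exp (2 * ↑Real.pi * Complex.I * (j:ℂ) / ((3:ℕ):ℂ)) = z ^ (5*j) := by
    intro j; rw [← eq1 (5*j)]; congr 1; push_cast; ring
  have hw : z^10 + z^5 + 1 = 0 := by
    rcases mul_eq_zero.mp (show (z^5 - 1) * (z^10 + z^5 + 1) = 0 by linear_combination h15) with h | h
    · exact absurd (by linear_combination h) h5ne
    · exact h
  have heta : z^12 + z^9 + z^6 + z^3 + 1 = 0 := by
    rcases mul_eq_zero.mp (show (z^3 - 1) * (z^12 + z^9 + z^6 + z^3 + 1) = 0 by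
      linear_combination h15) with h | h
    · exact absurd (by linear_combination h) h3ne
    · exact h
  have hphi : z^8 - z^7 + z^5 - z^4 + z^3 - z + 1 = 0 := by
    rcases mul_eq_zero.mp (show (z^2 + z + 1) * (z^8 - z^7 + z^5 - z^4 + z^3 - z + 1) = 0 by
      linear_combination hw) with h | h
    · exact absurd (show z^3 = 1 by linear_combination (z - 1) * h) h3ne
    · exact h
  have hfilt : (Finset.range 3).filter (fun j => Nat.gcd j 3 = 1) = {1, 2} := by decide
  have expand : ∀ g : ℕ → ℂ, ∏ j ∈ Finset.range 15, g j
      = g 0 * g 1 * g 2 * g 3 * g 4 * g 6 * g 7 * g 8 * g 9 * g 11 * g 12 * g 13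
        * g 14 * g 5 * g 10 := by
    intro g
    simp only [Finset.prod_range_succ, Finset.prod_range_zero, one_mul]
    ring
  constructor
  · intro A B hN
    have hF0₁ : (Polynomial.aeval (z ^ 0)) (1 - X ^ 5 - X ^ 11 + X ^ 12 + X ^ 3 * (1 + X ^ 3 + X ^ 6)
          + (1 - X) * Phi5 * Phi15 * (Polynomial.C A * X + Polynomial.C B)) = 3 := by
      simp only [Phi5, Phi15, map_add, map_sub, map_mul, map_pow, map_one, aeval_X, aeval_C,
      algebraMap_int_eq, eq_intCast, map_intCast]
      ring
    have hF1₁ : (Polynomial.aeval (z ^ 1)) (1 - X ^ 5 - X ^ 11 + X ^ 12 + X ^ 3 * (1 + X ^ 3 + X ^ 6)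
          + (1 - X) * Phi5 * Phi15 * (Polynomial.C A * X + Polynomial.C B)) = (z^12 - z^11 + z^9 + z^6 - z^5 + z^3 + 1) := by
      simp only [Phi5, Phi15, map_add, map_sub, map_mul, map_pow, map_one, aeval_X, aeval_C,
      algebraMap_int_eq, eq_intCast, map_intCast]
      linear_combination (0:ℂ) * h15 + (- z^6*(A:ℂ) - z^5*(B:ℂ) + z*(A:ℂ) + (B:ℂ)) * hphi
    have hF2₁ : (Polynomial.aeval (z ^ 2)) (1 - X ^ 5 - X ^ 11 + X ^ 12 + X ^ 3 * (1 + X ^ 3 + X ^ 6)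
          + (1 - X) * Phi5 * Phi15 * (Polynomial.C A * X + Polynomial.C B)) = (z^12 - z^10 + z^9 - z^7 + z^6 + z^3 + 1) := by
      simp only [Phi5, Phi15, map_add, map_sub, map_mul, map_pow, map_one, aeval_X, aeval_C,
      algebraMap_int_eq, eq_intCast, map_intCast]
      linear_combination (- z^13*(A:ℂ) + z^11*(A:ℂ) - z^11*(B:ℂ) + z^9*(B:ℂ) + z^9 - z^7*(A:ℂ) - z^7 + z^5*(A:ℂ) - z^5*(B:ℂ) + z^3*(B:ℂ) + z^3 - z*(A:ℂ)) * h15 + (z^6*(A:ℂ) - z^6*(B:ℂ) - z^5*(B:ℂ) - z*(A:ℂ) + z*(B:ℂ) + (B:ℂ)) * hphi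
    have hF3₁ : (Polynomial.aeval (z ^ 3)) (1 - X ^ 5 - X ^ 11 + X ^ 12 + X ^ 3 * (1 + X ^ 3 + X ^ 6)
          + (1 - X) * Phi5 * Phi15 * (Polynomial.C A * X + Polynomial.C B)) = (z^12 + z^9 + z^6) := by
      simp only [Phi5, Phi15, map_add, map_sub, map_mul, map_pow, map_one, aeval_X, aeval_C,
      algebraMap_int_eq, eq_intCast, map_intCast]
      linear_combination (- z^27*(A:ℂ) + z^24*(A:ℂ) - z^24*(B:ℂ) + z^21*(B:ℂ) + z^21 - z^18*(A:ℂ) - z^18 + z^15*(A:ℂ) - z^15*(B:ℂ) - z^12*(A:ℂ) + z^12*(B:ℂ) + z^12 - z^9*(B:ℂ) + z^6*(A:ℂ) + z^6 - z^3*(A:ℂ) + z^3*(B:ℂ) - (B:ℂ) - 1) * h15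
    have hF4₁ : (Polynomial.aeval (z ^ 4)) (1 - X ^ 5 - X ^ 11 + X ^ 12 + X ^ 3 * (1 + X ^ 3 + X ^ 6)
          + (1 - X) * Phi5 * Phi15 * (Polynomial.C A * X + Polynomial.C B)) = (- z^14 + z^12 + z^9 + z^6 - z^5 + z^3 + 1) := by
      simp only [Phi5, Phi15, map_add, map_sub, map_mul, map_pow, map_one, aeval_X, aeval_C,
      algebraMap_int_eq, eq_intCast, map_intCast]
      linear_combination (- z^41*(A:ℂ) + z^37*(A:ℂ) - z^37*(B:ℂ) + z^33*(B:ℂ) + z^33 - z^29*(A:ℂ) - z^29 - z^26*(A:ℂ) + z^25*(A:ℂ) - z^25*(B:ℂ) + z^22*(A:ℂ) - z^22*(B:ℂ) + z^21*(B:ℂ) + z^21 + z^18*(B:ℂ) + z^18 - z^17*(A:ℂ) - z^14*(A:ℂ) - z^14 + z^13*(A:ℂ) - z^13*(B:ℂ) - z^11*(A:ℂ) + z^10*(A:ℂ) - z^10*(B:ℂ) + z^9*(B:ℂ) + z^9 + z^7*(A:ℂ) - z^7*(B:ℂ) + z^6*(B:ℂ) + z^6 - z^5*(A:ℂ) - z^5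 + z^3*(B:ℂ) + z^3 - z^2*(A:ℂ) + z*(A:ℂ) - z*(B:ℂ)) * h15 + (- z^6*(A:ℂ) - z^5*(B:ℂ) + z*(A:ℂ) + (B:ℂ)) * hphi
    have hF5₁ : (Polynomial.aeval (z ^ 5)) (1 - X ^ 5 - X ^ 11 + X ^ 12 + X ^ 3 * (1 + X ^ 3 + X ^ 6)
          + (1 - X) * Phi5 * Phi15 * (Polynomial.C A * X + Polynomial.C B)) = (1 - z^5) * (4 + 3*z^5 + 5*((A:ℂ)*z^5 + (B:ℂ))) := by
      simp only [Phi5, Phi15, map_add, map_sub, map_mul, map_pow, map_one, aeval_X, aeval_C,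
      algebraMap_int_eq, eq_intCast, map_intCast]
      linear_combination (- z^55*(A:ℂ) + z^50*(A:ℂ) - z^50*(B:ℂ) + z^45*(B:ℂ) + z^45 - 2*z^40*(A:ℂ) - z^40 + 2*z^35*(A:ℂ) - 2*z^35*(B:ℂ) + 2*z^30*(B:ℂ) + 2*z^30 - 3*z^25*(A:ℂ) - z^25 + 3*z^20*(A:ℂ) - 3*z^20*(B:ℂ) + 3*z^15*(B:ℂ) + 3*z^15 - 4*z^10*(A:ℂ) - 2*z^10 + 4*z^5*(A:ℂ) - 4*z^5*(B:ℂ) + 4*(B:ℂ) + 4) * h15 + (1) * hw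
    have hF6₁ : (Polynomial.aeval (z ^ 6)) (1 - X ^ 5 - X ^ 11 + X ^ 12 + X ^ 3 * (1 + X ^ 3 + X ^ 6)
          + (1 - X) * Phi5 * Phi15 * (Polynomial.C A * X + Polynomial.C B)) = (z^12 + z^9 + z^3) := by
      simp only [Phi5, Phi15, map_add, map_sub, map_mul, map_pow, map_one, aeval_X, aeval_C,
      algebraMap_int_eq, eq_intCast, map_intCast]
      linear_combination (- z^69*(A:ℂ) + z^63*(A:ℂ) - z^63*(B:ℂ) + z^57*(B:ℂ) + z^57 - z^54*(A:ℂ) - z^51*(A:ℂ) - z^51 + z^48*(A:ℂ) - z^48*(B:ℂ) + z^45*(A:ℂ) - z^45*(B:ℂ) + z^42*(B:ℂ) + z^42 - z^39*(A:ℂ) + z^39*(B:ℂ) + z^39 - z^36*(A:ℂ) - z^36 - z^33*(B:ℂ) + z^30*(A:ℂ) - z^30*(B:ℂ) + z^27*(A:ℂ) + z^27 - z^24*(A:ℂ) + z^24*(B:ℂ) + z^24 - z^21*(A:ℂ) + z^21*(B:ℂ) - z^18*(B:ℂ) - z^15*(B:ℂ) - z^15 + z^12*(A:ℂ) + z^12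 + z^9 - z^6*(A:ℂ) + z^6*(B:ℂ) + z^3 - (B:ℂ) - 1) * h15
    have hF7₁ : (Polynomial.aeval (z ^ 7)) (1 - X ^ 5 - X ^ 11 + X ^ 12 + X ^ 3 * (1 + X ^ 3 + X ^ 6)
          + (1 - X) * Phi5 * Phi15 * (Polynomial.C A * X + Polynomial.C B)) = (z^12 + z^9 + z^6 - z^5 + z^3 - z^2 + 1) := by
      simp only [Phi5, Phi15, map_add, map_sub, map_mul, map_pow, map_one, aeval_X, aeval_C,
      algebraMap_int_eq, eq_intCast, map_intCast]
      linear_combination (- z^83*(A:ℂ) + z^76*(A:ℂ) - z^76*(B:ℂ) + z^69*(B:ℂ) + z^69 - z^68*(A:ℂ) - z^62*(A:ℂ) - z^62 + z^61*(A:ℂ) - z^61*(B:ℂ) + z^55*(A:ℂ) - z^55*(B:ℂ) + z^54*(B:ℂ) + z^54 - z^53*(A:ℂ) + z^48*(B:ℂ) + z^48 - z^47*(A:ℂ) - z^47 + z^46*(A:ℂ) - z^46*(B:ℂ) - z^41*(A:ℂ) + z^40*(A:ℂ) - z^40*(B:ℂ) + z^39*(B:ℂ) + z^39 - z^38*(A:ℂ)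 + z^34*(A:ℂ) - z^34*(B:ℂ) + z^33*(B:ℂ) + z^33 - z^32*(A:ℂ) - z^32 + z^31*(A:ℂ) - z^31*(B:ℂ) + z^27*(B:ℂ) + z^27 - z^26*(A:ℂ) + z^25*(A:ℂ) - z^25*(B:ℂ) + z^24*(B:ℂ) + z^24 - z^23*(A:ℂ) - z^20*(A:ℂ) - z^20 + z^19*(A:ℂ) - z^19*(B:ℂ) + z^18*(B:ℂ) + z^18 - z^17*(A:ℂ) - z^17 + z^16*(A:ℂ) - z^16*(B:ℂ) + z^13*(A:ℂ) - z^13*(B:ℂ) + z^12*(B:ℂ) + z^12 - z^11*(A:ℂ) + z^10*(A:ℂ) - z^10*(B:ℂ) + z^9*(B:ℂ) + z^9 - z^8*(A:ℂ) + z^6*(B:ℂ) + z^6 - z^5*(A:ℂ) - z^5 + z^4*(A:ℂ) - z^4*(B:ℂ) + z^3*(B:ℂ) + z^3 - z^2*(A:ℂ) - z^2 + z*(A:ℂ) - z*(B:ℂ)) * h15 + (- z^6*(A:ℂ) - z^5*(B:ℂ) + z*(A:ℂ) + (B:ℂ)) * hphi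
    have hF8₁ : (Polynomial.aeval (z ^ 8)) (1 - X ^ 5 - X ^ 11 + X ^ 12 + X ^ 3 * (1 + X ^ 3 + X ^ 6)
          + (1 - X) * Phi5 * Phi15 * (Polynomial.C A * X + Polynomial.C B)) = (- z^13 + z^12 - z^10 + z^9 + z^6 + z^3 + 1) := by
      simp only [Phi5, Phi15, map_add, map_sub, map_mul, map_pow, map_one, aeval_X, aeval_C,
      algebraMap_int_eq, eq_intCast, map_intCast]
      linear_combination (- z^97*(A:ℂ) + z^89*(A:ℂ) - z^89*(B:ℂ) - z^82*(A:ℂ) + z^81*(B:ℂ) + z^81 + z^74*(A:ℂ) - z^74*(B:ℂ) - z^73*(A:ℂ) - z^73 - z^67*(A:ℂ) + z^66*(B:ℂ) + z^66 + z^65*(A:ℂ) - z^65*(B:ℂ) + z^59*(A:ℂ) - z^59*(B:ℂ) - z^58*(A:ℂ) - z^58 + z^57*(B:ℂ) + z^57 - z^52*(A:ℂ) + z^51*(B:ℂ) + z^51 + z^50*(A:ℂ) - z^50*(B:ℂ) - z^49*(A:ℂ) + z^44*(A:ℂ) - z^44*(B:ℂ) - z^43*(A:ℂ) - z^43 + z^42*(B:ℂ)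 + z^42 + z^41*(A:ℂ) - z^41*(B:ℂ) - z^37*(A:ℂ) + z^36*(B:ℂ) + z^36 + z^35*(A:ℂ) - z^35*(B:ℂ) - z^34*(A:ℂ) + z^33*(B:ℂ) + z^33 + z^29*(A:ℂ) - z^29*(B:ℂ) - z^28*(A:ℂ) - z^28 + z^27*(B:ℂ) + z^27 + z^26*(A:ℂ) - z^26*(B:ℂ) - z^25*(A:ℂ) - z^25 - z^22*(A:ℂ) + z^21*(B:ℂ) + z^21 + z^20*(A:ℂ) - z^20*(B:ℂ) - z^19*(A:ℂ) + z^18*(B:ℂ) + z^18 + z^17*(A:ℂ) - z^17*(B:ℂ) + z^14*(A:ℂ) - z^14*(B:ℂ) - z^13*(A:ℂ) - z^13 + z^12*(B:ℂ) + z^12 + z^11*(A:ℂ) - z^11*(B:ℂ) - z^10*(A:ℂ) - z^10 + z^9*(B:ℂ) + z^9 - z^7*(A:ℂ) + z^6*(B:ℂ) + z^6 + z^5*(A:ℂ) - z^5*(B:ℂ) - z^4*(A:ℂ) + z^3*(B:ℂ) + z^3 + z^2*(A:ℂ) - z^2*(B:ℂ) - z*(A:ℂ)) * h15 + (z^6*(A:ℂ)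 - z^6*(B:ℂ) - z^5*(B:ℂ) - z*(A:ℂ) + z*(B:ℂ) + (B:ℂ)) * hphi
    have hF9₁ : (Polynomial.aeval (z ^ 9)) (1 - X ^ 5 - X ^ 11 + X ^ 12 + X ^ 3 * (1 + X ^ 3 + X ^ 6)
          + (1 - X) * Phi5 * Phi15 * (Polynomial.C A * X + Polynomial.C B)) = (z^12 + z^6 + z^3) := by
      simp only [Phi5, Phi15, map_add, map_sub, map_mul, map_pow, map_one, aeval_X, aeval_C,
      algebraMap_int_eq, eq_intCast, map_intCast]
      linear_combination (- z^111*(A:ℂ) + z^102*(A:ℂ) - z^102*(B:ℂ) - z^96*(A:ℂ) + z^93*(B:ℂ) + z^93 + z^87*(A:ℂ) - z^87*(B:ℂ) - z^84*(A:ℂ) - z^84 - z^81*(A:ℂ) + z^78*(B:ℂ) + z^78 + z^75*(A:ℂ) - z^75*(B:ℂ) + z^72*(A:ℂ) - z^72*(B:ℂ) - z^69*(A:ℂ) - z^69 - z^66*(A:ℂ) + z^66*(B:ℂ) + z^66 + z^63*(B:ℂ) + z^63 + z^60*(A:ℂ) - z^60*(B:ℂ) - z^57*(B:ℂ) - z^54*(A:ℂ)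 - z^54 - z^51*(A:ℂ) + z^51*(B:ℂ) + z^51 + z^48*(A:ℂ) + z^48 + z^45*(A:ℂ) - z^45*(B:ℂ) - z^42*(B:ℂ) - z^39*(A:ℂ) + z^39*(B:ℂ) - z^36*(A:ℂ) + z^36*(B:ℂ) + z^36 + z^33*(A:ℂ) + z^33 - z^30*(B:ℂ) - z^30 - z^27*(B:ℂ) - z^24*(A:ℂ) + z^24*(B:ℂ) + z^21 + z^18*(A:ℂ) + z^18 - z^15*(B:ℂ) - z^15 + z^12 - z^9*(A:ℂ) + z^9*(B:ℂ) + z^6 + z^3 - (B:ℂ) - 1) * h15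
    have hF10₁ : (Polynomial.aeval (z ^ 10)) (1 - X ^ 5 - X ^ 11 + X ^ 12 + X ^ 3 * (1 + X ^ 3 + X ^ 6)
          + (1 - X) * Phi5 * Phi15 * (Polynomial.C A * X + Polynomial.C B)) = (1 - z^10) * (4 + 3*z^10 + 5*((A:ℂ)*z^10 + (B:ℂ))) := by
      simp only [Phi5, Phi15, map_add, map_sub, map_mul, map_pow, map_one, aeval_X, aeval_C,
      algebraMap_int_eq, eq_intCast, map_intCast]
      linear_combination (- z^125*(A:ℂ) + z^115*(A:ℂ) - z^115*(B:ℂ) - z^110*(A:ℂ) + z^105*(B:ℂ) + z^105 + z^100*(A:ℂ) - z^100*(B:ℂ) - 2*z^95*(A:ℂ) - z^95 + z^90*(B:ℂ) + z^90 + 2*z^85*(A:ℂ) - 2*z^85*(B:ℂ) - 2*z^80*(A:ℂ) - z^80 + 2*z^75*(B:ℂ) + 2*z^75 + 2*z^70*(A:ℂ) - 2*z^70*(B:ℂ) - 3*z^65*(A:ℂ) - z^65 + 2*z^60*(B:ℂ) + 2*z^60 + 3*z^55*(A:ℂ) - 3*z^55*(B:ℂ) - 3*z^50*(A:ℂ)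 - z^50 + 3*z^45*(B:ℂ) + 3*z^45 + 3*z^40*(A:ℂ) - 3*z^40*(B:ℂ) - 4*z^35*(A:ℂ) - 2*z^35 + 3*z^30*(B:ℂ) + 3*z^30 + 4*z^25*(A:ℂ) - 4*z^25*(B:ℂ) - 4*z^20*(A:ℂ) - 2*z^20 + 4*z^15*(B:ℂ) + 4*z^15 + 4*z^10*(A:ℂ) - 4*z^10*(B:ℂ) + z^5 + 4*(B:ℂ) + 4) * h15 + (1) * hw
    have hF11₁ : (Polynomial.aeval (z ^ 11)) (1 - X ^ 5 - X ^ 11 + X ^ 12 + X ^ 3 * (1 + X ^ 3 + X ^ 6)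
          + (1 - X) * Phi5 * Phi15 * (Polynomial.C A * X + Polynomial.C B)) = (z^12 - z^10 + z^9 + z^6 + z^3 - z + 1) := by
      simp only [Phi5, Phi15, map_add, map_sub, map_mul, map_pow, map_one, aeval_X, aeval_C,
      algebraMap_int_eq, eq_intCast, map_intCast]
      linear_combination (- z^139*(A:ℂ) + z^128*(A:ℂ) - z^128*(B:ℂ) - z^124*(A:ℂ) + z^117*(B:ℂ) + z^117 + z^113*(A:ℂ) - z^113*(B:ℂ) - z^109*(A:ℂ) - z^106*(A:ℂ) - z^106 + z^102*(B:ℂ) + z^102 + z^98*(A:ℂ) - z^98*(B:ℂ) + z^95*(A:ℂ) - z^95*(B:ℂ) - z^94*(A:ℂ) - z^91*(A:ℂ) - z^91 + z^87*(B:ℂ) + z^87 + z^84*(B:ℂ) + z^84 + z^83*(A:ℂ) - z^83*(B:ℂ) + z^80*(A:ℂ) - z^80*(B:ℂ) - z^79*(A:ℂ) - z^76*(A:ℂ) - z^76 - z^73*(A:ℂ) + z^72*(B:ℂ) + z^72 + z^69*(B:ℂ) + z^69 + z^68*(A:ℂ) - z^68*(B:ℂ) + z^65*(A:ℂ) - z^65*(B:ℂ)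 - z^64*(A:ℂ) + z^62*(A:ℂ) - z^62*(B:ℂ) - z^61*(A:ℂ) - z^61 - z^58*(A:ℂ) + z^57*(B:ℂ) + z^57 + z^54*(B:ℂ) + z^54 + z^53*(A:ℂ) - z^53*(B:ℂ) + z^51*(B:ℂ) + z^51 + z^50*(A:ℂ) - z^50*(B:ℂ) - z^49*(A:ℂ) + z^47*(A:ℂ) - z^47*(B:ℂ) - z^46*(A:ℂ) - z^46 - z^43*(A:ℂ) + z^42*(B:ℂ) + z^42 - z^40*(A:ℂ) - z^40 + z^39*(B:ℂ) + z^39 + z^38*(A:ℂ) - z^38*(B:ℂ) + z^36*(B:ℂ) + z^36 + z^35*(A:ℂ) - z^35*(B:ℂ) - z^34*(A:ℂ) + z^32*(A:ℂ) - z^32*(B:ℂ) - z^31*(A:ℂ) - z^31 + z^29*(A:ℂ) - z^29*(B:ℂ) - z^28*(A:ℂ) + z^27*(B:ℂ) + z^27 - z^25*(A:ℂ) - z^25 + z^24*(B:ℂ) + z^24 + z^23*(A:ℂ) - z^23*(B:ℂ) + z^21*(B:ℂ) + z^21 + z^20*(A:ℂ) - z^20*(B:ℂ) - z^19*(A:ℂ)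 + z^18*(B:ℂ) + z^18 + z^17*(A:ℂ) - z^17*(B:ℂ) - z^16*(A:ℂ) - z^16 + z^14*(A:ℂ) - z^14*(B:ℂ) - z^13*(A:ℂ) + z^12*(B:ℂ) + z^12 - z^10*(A:ℂ) - z^10 + z^9*(B:ℂ) + z^9 + z^8*(A:ℂ) - z^8*(B:ℂ) - z^7*(A:ℂ) + z^6*(B:ℂ) + z^6 + z^5*(A:ℂ) - z^5*(B:ℂ) - z^4*(A:ℂ) + z^3*(B:ℂ) + z^3 + z^2*(A:ℂ) - z^2*(B:ℂ) - z*(A:ℂ) - z) * h15 + (z^6*(A:ℂ) - z^6*(B:ℂ) - z^5*(B:ℂ) - z*(A:ℂ) + z*(B:ℂ) + (B:ℂ)) * hphi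
    have hF12₁ : (Polynomial.aeval (z ^ 12)) (1 - X ^ 5 - X ^ 11 + X ^ 12 + X ^ 3 * (1 + X ^ 3 + X ^ 6)
          + (1 - X) * Phi5 * Phi15 * (Polynomial.C A * X + Polynomial.C B)) = (z^9 + z^6 + z^3) := by
      simp only [Phi5, Phi15, map_add, map_sub, map_mul, map_pow, map_one, aeval_X, aeval_C,
      algebraMap_int_eq, eq_intCast, map_intCast]
      linear_combination (- z^153*(A:ℂ) + z^141*(A:ℂ) - z^141*(B:ℂ) - z^138*(A:ℂ) + z^129*(B:ℂ) + z^129 + z^126*(A:ℂ) - z^126*(B:ℂ) - z^123*(A:ℂ) - z^117*(A:ℂ) - z^117 + z^114*(B:ℂ) + z^114 + z^111*(A:ℂ) - z^111*(B:ℂ) - z^108*(A:ℂ) + z^105*(A:ℂ) - z^105*(B:ℂ) - z^102*(A:ℂ) - z^102 + z^99*(B:ℂ) + z^99 + z^96*(A:ℂ) - z^96*(B:ℂ) - z^93*(A:ℂ) + z^93*(B:ℂ) + z^93 + z^90*(A:ℂ) - z^90*(B:ℂ) - z^87*(A:ℂ) - z^87 + z^84*(B:ℂ) + z^84 - z^81*(B:ℂ)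 - z^78*(A:ℂ) + z^78*(B:ℂ) + z^78 + z^75*(A:ℂ) - z^75*(B:ℂ) - z^72*(A:ℂ) - z^72 + z^69*(A:ℂ) + z^69 - z^66*(B:ℂ) - z^63*(A:ℂ) + z^63*(B:ℂ) + z^63 + z^60*(A:ℂ) - z^60*(B:ℂ) - z^57*(A:ℂ) + z^57*(B:ℂ) + z^54*(A:ℂ) + z^54 - z^51*(B:ℂ) - z^48*(A:ℂ) + z^48*(B:ℂ) + z^48 - z^45*(B:ℂ) - z^45 - z^42*(A:ℂ) + z^42*(B:ℂ) + z^39*(A:ℂ) + z^39 - z^36*(B:ℂ) + z^33 - z^30*(B:ℂ) - z^30 - z^27*(A:ℂ) + z^27*(B:ℂ) + z^24*(A:ℂ) + z^24 + z^21 + z^18 - z^15*(B:ℂ) - z^15 - z^12*(A:ℂ) + z^12*(B:ℂ) + z^9 + z^6 + z^3 - (B:ℂ) - 1) * h15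
    have hF13₁ : (Polynomial.aeval (z ^ 13)) (1 - X ^ 5 - X ^ 11 + X ^ 12 + X ^ 3 * (1 + X ^ 3 + X ^ 6)
          + (1 - X) * Phi5 * Phi15 * (Polynomial.C A * X + Polynomial.C B)) = (z^12 + z^9 - z^8 + z^6 - z^5 + z^3 + 1) := by
      simp only [Phi5, Phi15, map_add, map_sub, map_mul, map_pow, map_one, aeval_X, aeval_C,
      algebraMap_int_eq, eq_intCast, map_intCast]
      linear_combination (- z^167*(A:ℂ) + z^154*(A:ℂ) - z^154*(B:ℂ) - z^152*(A:ℂ) + z^141*(B:ℂ) + z^141 + z^139*(A:ℂ) - z^139*(B:ℂ) - z^137*(A:ℂ) - z^128*(A:ℂ) - z^128 + z^126*(B:ℂ) + z^126 + z^124*(A:ℂ) - z^124*(B:ℂ) - z^122*(A:ℂ) + z^115*(A:ℂ) - z^115*(B:ℂ) - z^113*(A:ℂ) - z^113 + z^111*(B:ℂ) + z^111 + z^109*(A:ℂ) - z^109*(B:ℂ) - z^107*(A:ℂ) + z^102*(B:ℂ) + z^102 + z^100*(A:ℂ) - z^100*(B:ℂ) - z^98*(A:ℂ) - z^98 + z^96*(B:ℂ)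 + z^96 + z^94*(A:ℂ) - z^94*(B:ℂ) - z^92*(A:ℂ) - z^89*(A:ℂ) + z^87*(B:ℂ) + z^87 + z^85*(A:ℂ) - z^85*(B:ℂ) - z^83*(A:ℂ) - z^83 + z^81*(B:ℂ) + z^81 + z^79*(A:ℂ) - z^79*(B:ℂ) - z^77*(A:ℂ) + z^76*(A:ℂ) - z^76*(B:ℂ) - z^74*(A:ℂ) + z^72*(B:ℂ) + z^72 + z^70*(A:ℂ) - z^70*(B:ℂ) - z^68*(A:ℂ) - z^68 + z^66*(B:ℂ) + z^66 + z^64*(A:ℂ) - z^64*(B:ℂ) + z^63*(B:ℂ) + z^63 - z^62*(A:ℂ) + z^61*(A:ℂ) - z^61*(B:ℂ) - z^59*(A:ℂ) + z^57*(B:ℂ) + z^57 + z^55*(A:ℂ) - z^55*(B:ℂ) - z^53*(A:ℂ) - z^53 + z^51*(B:ℂ) + z^51 - z^50*(A:ℂ) - z^50 + z^49*(A:ℂ) - z^49*(B:ℂ) + z^48*(B:ℂ) + z^48 - z^47*(A:ℂ) + z^46*(A:ℂ) - z^46*(B:ℂ) - z^44*(A:ℂ) + z^42*(B:ℂ) +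 z^42 + z^40*(A:ℂ) - z^40*(B:ℂ) - z^38*(A:ℂ) - z^38 + z^37*(A:ℂ) - z^37*(B:ℂ) + z^36*(B:ℂ) + z^36 - z^35*(A:ℂ) - z^35 + z^34*(A:ℂ) - z^34*(B:ℂ) + z^33*(B:ℂ) + z^33 - z^32*(A:ℂ) + z^31*(A:ℂ) - z^31*(B:ℂ) - z^29*(A:ℂ) + z^27*(B:ℂ) + z^27 + z^25*(A:ℂ) - z^25*(B:ℂ) + z^24*(B:ℂ) + z^24 - z^23*(A:ℂ) - z^23 + z^22*(A:ℂ) - z^22*(B:ℂ) + z^21*(B:ℂ) + z^21 - z^20*(A:ℂ) - z^20 + z^19*(A:ℂ) - z^19*(B:ℂ) + z^18*(B:ℂ) + z^18 - z^17*(A:ℂ) + z^16*(A:ℂ) - z^16*(B:ℂ) - z^14*(A:ℂ) + z^12*(B:ℂ) + z^12 - z^11*(A:ℂ) + z^10*(A:ℂ) - z^10*(B:ℂ) + z^9*(B:ℂ) + z^9 - z^8*(A:ℂ) - z^8 + z^7*(A:ℂ) - z^7*(B:ℂ) + z^6*(B:ℂ) + z^6 - z^5*(A:ℂ) - z^5 +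 z^4*(A:ℂ) - z^4*(B:ℂ) + z^3*(B:ℂ) + z^3 - z^2*(A:ℂ) + z*(A:ℂ) - z*(B:ℂ)) * h15 + (- z^6*(A:ℂ) - z^5*(B:ℂ) + z*(A:ℂ) + (B:ℂ)) * hphi
    have hF14₁ : (Polynomial.aeval (z ^ 14)) (1 - X ^ 5 - X ^ 11 + X ^ 12 + X ^ 3 * (1 + X ^ 3 + X ^ 6)
          + (1 - X) * Phi5 * Phi15 * (Polynomial.C A * X + Polynomial.C B)) = (z^12 - z^10 + z^9 + z^6 - z^4 + z^3 + 1) := by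
      simp only [Phi5, Phi15, map_add, map_sub, map_mul, map_pow, map_one, aeval_X, aeval_C,
      algebraMap_int_eq, eq_intCast, map_intCast]
      linear_combination (- z^181*(A:ℂ) + z^167*(A:ℂ) - z^167*(B:ℂ) - z^166*(A:ℂ) + z^153*(B:ℂ) + z^153 + z^152*(A:ℂ) - z^152*(B:ℂ) - z^151*(A:ℂ) - z^139*(A:ℂ) - z^139 + z^138*(B:ℂ) + z^138 + z^137*(A:ℂ) - z^137*(B:ℂ) - z^136*(A:ℂ) + z^125*(A:ℂ) - z^125*(B:ℂ) - z^124*(A:ℂ) - z^124 + z^123*(B:ℂ) + z^123 + z^122*(A:ℂ) - z^122*(B:ℂ) - z^121*(A:ℂ) + z^111*(B:ℂ) + z^111 + z^110*(A:ℂ) - z^110*(B:ℂ) - z^109*(A:ℂ) - z^109 + z^108*(B:ℂ) + z^108 + z^107*(A:ℂ) - z^107*(B:ℂ) - z^106*(A:ℂ) - z^97*(A:ℂ) + z^96*(B:ℂ) + z^96 + z^95*(A:ℂ) - z^95*(B:ℂ) - z^94*(A:ℂ) - z^94 + z^93*(B:ℂ) + z^93 + z^92*(A:ℂ) - z^92*(B:ℂ)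 - z^91*(A:ℂ) + z^83*(A:ℂ) - z^83*(B:ℂ) - z^82*(A:ℂ) + z^81*(B:ℂ) + z^81 + z^80*(A:ℂ) - z^80*(B:ℂ) - z^79*(A:ℂ) - z^79 + z^78*(B:ℂ) + z^78 + z^77*(A:ℂ) - z^77*(B:ℂ) - z^76*(A:ℂ) + z^69*(B:ℂ) + z^69 + z^68*(A:ℂ) - z^68*(B:ℂ) - z^67*(A:ℂ) + z^66*(B:ℂ) + z^66 + z^65*(A:ℂ) - z^65*(B:ℂ) - z^64*(A:ℂ) - z^64 + z^63*(B:ℂ) + z^63 + z^62*(A:ℂ) - z^62*(B:ℂ) - z^61*(A:ℂ) - z^55*(A:ℂ) - z^55 + z^54*(B:ℂ) + z^54 + z^53*(A:ℂ) - z^53*(B:ℂ) - z^52*(A:ℂ) + z^51*(B:ℂ) + z^51 + z^50*(A:ℂ) - z^50*(B:ℂ) - z^49*(A:ℂ) - z^49 + z^48*(B:ℂ) + z^48 + z^47*(A:ℂ) - z^47*(B:ℂ) - z^46*(A:ℂ) + z^41*(A:ℂ) - z^41*(B:ℂ) - z^40*(A:ℂ) - z^40 + z^39*(B:ℂ) +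 z^39 + z^38*(A:ℂ) - z^38*(B:ℂ) - z^37*(A:ℂ) + z^36*(B:ℂ) + z^36 + z^35*(A:ℂ) - z^35*(B:ℂ) - z^34*(A:ℂ) - z^34 + z^33*(B:ℂ) + z^33 + z^32*(A:ℂ) - z^32*(B:ℂ) - z^31*(A:ℂ) + z^27*(B:ℂ) + z^27 + z^26*(A:ℂ) - z^26*(B:ℂ) - z^25*(A:ℂ) - z^25 + z^24*(B:ℂ) + z^24 + z^23*(A:ℂ) - z^23*(B:ℂ) - z^22*(A:ℂ) + z^21*(B:ℂ) + z^21 + z^20*(A:ℂ) - z^20*(B:ℂ) - z^19*(A:ℂ) - z^19 + z^18*(B:ℂ) + z^18 + z^17*(A:ℂ) - z^17*(B:ℂ) - z^16*(A:ℂ) - z^13*(A:ℂ) + z^12*(B:ℂ) + z^12 + z^11*(A:ℂ) - z^11*(B:ℂ) - z^10*(A:ℂ) - z^10 + z^9*(B:ℂ) + z^9 + z^8*(A:ℂ) - z^8*(B:ℂ) - z^7*(A:ℂ) + z^6*(B:ℂ) + z^6 + z^5*(A:ℂ) - z^5*(B:ℂ) - z^4*(A:ℂ) - z^4 + z^3*(B:ℂ)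 + z^3 + z^2*(A:ℂ) - z^2*(B:ℂ) - z*(A:ℂ)) * h15 + (z^6*(A:ℂ) - z^6*(B:ℂ) - z^5*(B:ℂ) - z*(A:ℂ) + z*(B:ℂ) + (B:ℂ)) * hphi
    rw [Nnorm, hfilt, show ({1,2} : Finset ℕ) = insert 1 {2} from rfl,
      Finset.prod_insert (by decide), Finset.prod_singleton, eq3 1, eq3 2] at hN
    simp only [Phi5, Phi15, map_add, map_sub, map_mul, map_pow, map_one, aeval_X, aeval_C,
      algebraMap_int_eq, eq_intCast, map_intCast, Nat.cast_ofNat, Nat.cast_one] at hN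
    have hG₁ : (4 + 3*z^5 + 5*((A:ℂ)*z^5 + (B:ℂ))) * (4 + 3*z^10 + 5*((A:ℂ)*z^10 + (B:ℂ))) = (p:ℂ) := by linear_combination hN
    have hW1₁ : 3 * (z^12 - z^11 + z^9 + z^6 - z^5 + z^3 + 1) = (3*z^12 - 3*z^11 + 3*z^9 + 3*z^6 - 3*z^5 + 3*z^3 + 3) := by
      linear_combination (0:ℂ) * h15
    have hW2₁ : (3*z^12 - 3*z^11 + 3*z^9 + 3*z^6 - 3*z^5 + 3*z^3 + 3) * (z^12 - z^10 + z^9 - z^7 + z^6 + z^3 + 1) = (- 6*z^14 - 6*z^13 + 18*z^12 - 6*z^11 - 6*z^10 + 15*z^9 - 6*z^8 - 6*z^7 + 18*z^6 - 6*z^5 - 6*z^4 + 18*z^3 - 6*z^2 - 6*z + 18) := by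
      linear_combination (3*z^9 - 3*z^8 - 3*z^7 + 9*z^6 - 3*z^5 - 6*z^4 + 12*z^3 - 6*z^2 - 6*z + 15) * h15
    have hW3₁ : (- 6*z^14 - 6*z^13 + 18*z^12 - 6*z^11 - 6*z^10 + 15*z^9 - 6*z^8 - 6*z^7 + 18*z^6 - 6*z^5 - 6*z^4 + 18*z^3 - 6*z^2 - 6*z + 18) * (z^12 + z^9 + z^6) = (- 18*z^14 - 18*z^13 + 54*z^12 - 18*z^11 - 18*z^10 + 54*z^9 - 18*z^8 - 18*z^7 + 51*z^6 - 18*z^5 - 18*z^4 + 51*z^3 - 18*z^2 - 18*z + 51) := by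
      linear_combination (- 6*z^11 - 6*z^10 + 18*z^9 - 12*z^8 - 12*z^7 + 33*z^6 - 18*z^5 - 18*z^4 + 51*z^3 - 18*z^2 - 18*z + 51) * h15
    have hW4₁ : (- 18*z^14 - 18*z^13 + 54*z^12 - 18*z^11 - 18*z^10 + 54*z^9 - 18*z^8 - 18*z^7 + 51*z^6 - 18*z^5 - 18*z^4 + 51*z^3 - 18*z^2 - 18*z + 51) * (- z^14 + z^12 + z^9 + z^6 - z^5 + z^3 + 1) = (- 195*z^14 - 54*z^13 + 297*z^12 - 195*z^11 - 54*z^10 + 297*z^9 - 195*z^8 - 54*z^7 + 297*z^6 - 192*z^5 - 54*z^4 + 297*z^3 - 195*z^2 - 54*z + 297) := by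
      linear_combination (18*z^13 + 18*z^12 - 72*z^11 + 72*z^9 - 90*z^8 - 18*z^7 + 126*z^6 - 105*z^5 - 18*z^4 + 195*z^3 - 177*z^2 - 36*z + 246) * h15
    have hW5₁ : (- 195*z^14 - 54*z^13 + 297*z^12 - 195*z^11 - 54*z^10 + 297*z^9 - 195*z^8 - 54*z^7 + 297*z^6 - 192*z^5 - 54*z^4 + 297*z^3 - 195*z^2 - 54*z + 297) * (z^12 + z^9 + z^3) = (- 582*z^14 - 162*z^13 + 891*z^12 - 585*z^11 - 162*z^10 + 891*z^9 - 582*z^8 - 162*z^7 + 891*z^6 - 585*z^5 - 162*z^4 + 891*z^3 - 582*z^2 - 162*z + 891) := by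
      linear_combination (- 195*z^11 - 54*z^10 + 297*z^9 - 390*z^8 - 108*z^7 + 594*z^6 - 390*z^5 - 108*z^4 + 594*z^3 - 582*z^2 - 162*z + 891) * h15
    have hW6₁ : (- 582*z^14 - 162*z^13 + 891*z^12 - 585*z^11 - 162*z^10 + 891*z^9 - 582*z^8 - 162*z^7 + 891*z^6 - 585*z^5 - 162*z^4 + 891*z^3 - 582*z^2 - 162*z + 891) * (z^12 + z^9 + z^6 - z^5 + z^3 - z^2 + 1) = (- 4698*z^14 + 357*z^13 + 4779*z^12 - 4698*z^11 + 357*z^10 + 4779*z^9 - 4698*z^8 + 357*z^7 + 4779*z^6 - 4698*z^5 + 354*z^4 + 4779*z^3 - 4698*z^2 + 357*z + 4779) := by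
      linear_combination (- 582*z^11 - 162*z^10 + 891*z^9 - 1167*z^8 - 324*z^7 + 1782*z^6 - 1749*z^5 + 96*z^4 + 2835*z^3 - 3225*z^2 + 519*z + 3888) * h15
    have hW7₁ : (- 4698*z^14 + 357*z^13 + 4779*z^12 - 4698*z^11 + 357*z^10 + 4779*z^9 - 4698*z^8 + 357*z^7 + 4779*z^6 - 4698*z^5 + 354*z^4 + 4779*z^3 - 4698*z^2 + 357*z + 4779) * (- z^13 + z^12 - z^10 + z^9 + z^6 + z^3 + 1) = (- 24201*z^14 - 7776*z^13 + 33291*z^12 - 24204*z^11 - 7776*z^10 + 33291*z^9 - 24204*z^8 - 7776*z^7 + 33291*z^6 - 24204*z^5 - 7776*z^4 + 33291*z^3 - 24201*z^2 - 7776*z + 33291) := by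
      linear_combination (4698*z^12 - 5055*z^11 - 4422*z^10 + 14175*z^9 - 10110*z^8 - 8844*z^7 + 18954*z^6 - 14808*z^5 - 8487*z^4 + 23733*z^3 - 19503*z^2 - 8133*z + 28512) * h15
    have hW8₁ : (- 24201*z^14 - 7776*z^13 + 33291*z^12 - 24204*z^11 - 7776*z^10 + 33291*z^9 - 24204*z^8 - 7776*z^7 + 33291*z^6 - 24204*z^5 - 7776*z^4 + 33291*z^3 - 24201*z^2 - 7776*z + 33291) * (z^12 + z^6 + z^3) = (- 72609*z^14 - 23328*z^13 + 99873*z^12 - 72609*z^11 - 23328*z^10 + 99873*z^9 - 72609*z^8 - 23328*z^7 + 99873*z^6 - 72606*z^5 - 23328*z^4 + 99873*z^3 - 72609*z^2 - 23328*z + 99873) := by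
      linear_combination (- 24201*z^11 - 7776*z^10 + 33291*z^9 - 24204*z^8 - 7776*z^7 + 33291*z^6 - 48405*z^5 - 15552*z^4 + 66582*z^3 - 72609*z^2 - 23328*z + 99873) * h15
    have hW9₁ : (- 72609*z^14 - 23328*z^13 + 99873*z^12 - 72609*z^11 - 23328*z^10 + 99873*z^9 - 72609*z^8 - 23328*z^7 + 99873*z^6 - 72606*z^5 - 23328*z^4 + 99873*z^3 - 72609*z^2 - 23328*z + 99873) * (z^12 - z^10 + z^9 + z^6 + z^3 - z + 1) = (- 316386*z^14 - 316386*z^13 + 644583*z^12 - 316386*z^11 - 316386*z^10 + 644583*z^9 - 316386*z^8 - 316386*z^7 + 644580*z^6 - 316386*z^5 - 316386*z^4 + 644583*z^3 - 316386*z^2 - 316386*z + 644580) := by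
      linear_combination (- 72609*z^11 - 23328*z^10 + 172482*z^9 - 121890*z^8 - 146529*z^7 + 272355*z^6 - 194499*z^5 - 169857*z^4 + 372228*z^3 - 267105*z^2 - 193185*z + 544707) * h15
    have hW10₁ : (- 316386*z^14 - 316386*z^13 + 644583*z^12 - 316386*z^11 - 316386*z^10 + 644583*z^9 - 316386*z^8 - 316386*z^7 + 644580*z^6 - 316386*z^5 - 316386*z^4 + 644583*z^3 - 316386*z^2 - 316386*z + 644580) * (z^9 + z^6 + z^3) = (- 949158*z^14 - 949158*z^13 + 1933746*z^12 - 949158*z^11 - 949158*z^10 + 1933743*z^9 - 949158*z^8 - 949158*z^7 + 1933746*z^6 - 949158*z^5 - 949158*z^4 + 1933746*z^3 - 949158*z^2 - 949158*z + 1933746) := by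
      linear_combination (- 316386*z^8 - 316386*z^7 + 644583*z^6 - 632772*z^5 - 632772*z^4 + 1289166*z^3 - 949158*z^2 - 949158*z + 1933746) * h15
    have hW11₁ : (- 949158*z^14 - 949158*z^13 + 1933746*z^12 - 949158*z^11 - 949158*z^10 + 1933743*z^9 - 949158*z^8 - 949158*z^7 + 1933746*z^6 - 949158*z^5 - 949158*z^4 + 1933746*z^3 - 949158*z^2 - 949158*z + 1933746) * (z^12 + z^9 - z^8 + z^6 - z^5 + z^3 + 1) = (- 8613279*z^14 - 2847474*z^13 + 11567043*z^12 - 8613282*z^11 - 2847474*z^10 + 11567043*z^9 - 8613282*z^8 - 2847474*z^7 + 11567043*z^6 - 8613282*z^5 - 2847474*z^4 + 11567043*z^3 - 8613279*z^2 - 2847474*z + 11567043) := by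
      linear_combination (- 949158*z^11 - 949158*z^10 + 1933746*z^9 - 1898316*z^8 - 949158*z^7 + 4816647*z^6 - 4781220*z^5 - 949158*z^4 + 7699551*z^3 - 7664121*z^2 - 1898316*z + 9633297) * h15
    have hW12₁ : (- 8613279*z^14 - 2847474*z^13 + 11567043*z^12 - 8613282*z^11 - 2847474*z^10 + 11567043*z^9 - 8613282*z^8 - 2847474*z^7 + 11567043*z^6 - 8613282*z^5 - 2847474*z^4 + 11567043*z^3 - 8613279*z^2 - 2847474*z + 11567043) * (z^12 - z^10 + z^9 + z^6 - z^4 + z^3 + 1) = (- 37371456*z^14 - 37371456*z^13 + 75061776*z^12 - 37371456*z^11 - 37371456*z^10 + 75061776*z^9 - 37371456*z^8 - 37371456*z^7 + 75061776*z^6 - 37371456*z^5 - 37371456*z^4 + 75061776*z^3 - 37371456*z^2 - 37371456*z + 75061779) := by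
      linear_combination (- 8613279*z^11 - 2847474*z^10 + 20180322*z^9 - 14379087*z^8 - 17261991*z^7 + 31747368*z^6 - 22992369*z^5 - 20109465*z^4 + 51927690*z^3 - 28758177*z^2 - 34523982*z + 63494736) * h15
    have hfin₁ : (- 37371456*z^14 - 37371456*z^13 + 75061776*z^12 - 37371456*z^11 - 37371456*z^10 + 75061776*z^9 - 37371456*z^8 - 37371456*z^7 + 75061776*z^6 - 37371456*z^5 - 37371456*z^4 + 75061776*z^3 - 37371456*z^2 - 37371456*z + 75061779) * ((1 - z^5) * (4 + 3*z^5 + 5*((A:ℂ)*z^5 + (B:ℂ)))) * ((1 - z^10) * (4 + 3*z^10 + 5*((A:ℂ)*z^10 + (B:ℂ)))) = 9 * (p:ℂ) := by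
      linear_combination ((- 37371456*z^14 - 37371456*z^13 + 75061776*z^12 - 37371456*z^11 - 37371456*z^10 + 112433232*z^9 - 112433232*z^7 + 112433232*z^6 - 75061776*z^4 + 149804688*z^3 - 75061776*z^2 - 75061776*z + 149804691) * ((4 + 3*z^5 + 5*((A:ℂ)*z^5 + (B:ℂ))) * (4 + 3*z^10 + 5*((A:ℂ)*z^10 + (B:ℂ))))) * h15 + ((- 112433232*z^6 - 224866464*z^5 - 3*z^2 + 112433229*z + 224866461) * ((4 + 3*z^5 + 5*((A:ℂ)*z^5 + (B:ℂ))) * (4 + 3*z^10 + 5*((A:ℂ)*z^10 + (B:ℂ))))) * hphi + 9 * hG₁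
    have hM₁ : Mnorm 15 (1 - X ^ 5 - X ^ 11 + X ^ 12 + X ^ 3 * (1 + X ^ 3 + X ^ 6)
          + (1 - X) * Phi5 * Phi15 * (Polynomial.C A * X + Polynomial.C B)) = ∏ j ∈ Finset.range 15, (Polynomial.aeval (z ^ j)) (1 - X ^ 5 - X ^ 11 + X ^ 12 + X ^ 3 * (1 + X ^ 3 + X ^ 6)
          + (1 - X) * Phi5 * Phi15 * (Polynomial.C A * X + Polynomial.C B)) :=
      Finset.prod_congr rfl (fun j _ => by rw [eq1 j])
    rw [hM₁, expand]
    simp only [hF0₁, hF1₁, hF2₁, hF3₁, hF4₁, hF5₁, hF6₁, hF7₁, hF8₁, hF9₁, hF10₁, hF11₁, hF12₁, hF13₁, hF14₁]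
    rw [hW1₁, hW2₁, hW3₁, hW4₁, hW5₁, hW6₁, hW7₁, hW8₁, hW9₁, hW10₁, hW11₁, hW12₁]
    exact hfin₁
  · intro c d hN
    have hF0₂ : (Polynomial.aeval (z ^ 0)) (1 + X ^ 3 + X ^ 6 + X ^ 9 + X ^ 14
          + (X - 1) * Phi5 * Phi15 * (Polynomial.C c * X + Polynomial.C d)) = 5 := by
      simp only [Phi5, Phi15, map_add, map_sub, map_mul, map_pow, map_one, aeval_X, aeval_C,
      algebraMap_int_eq, eq_intCast, map_intCast]
      ring
    have hF1₂ : (Polynomial.aeval (z ^ 1)) (1 + X ^ 3 + X ^ 6 + X ^ 9 + X ^ 14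
          + (X - 1) * Phi5 * Phi15 * (Polynomial.C c * X + Polynomial.C d)) = (z^14 + z^9 + z^6 + z^3 + 1) := by
      simp only [Phi5, Phi15, map_add, map_sub, map_mul, map_pow, map_one, aeval_X, aeval_C,
      algebraMap_int_eq, eq_intCast, map_intCast]
      linear_combination (0:ℂ) * h15 + (z^6*(c:ℂ) + z^5*(d:ℂ) - z*(c:ℂ) - (d:ℂ)) * hphi
    have hF2₂ : (Polynomial.aeval (z ^ 2)) (1 + X ^ 3 + X ^ 6 + X ^ 9 + X ^ 14
          + (X - 1) * Phi5 * Phi15 * (Polynomial.C c * X + Polynomial.C d)) = (z^13 + z^12 + z^6 + z^3 + 1) := by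
      simp only [Phi5, Phi15, map_add, map_sub, map_mul, map_pow, map_one, aeval_X, aeval_C,
      algebraMap_int_eq, eq_intCast, map_intCast]
      linear_combination (z^13*(c:ℂ) + z^13 - z^11*(c:ℂ) + z^11*(d:ℂ) - z^9*(d:ℂ) + z^7*(c:ℂ) - z^5*(c:ℂ) + z^5*(d:ℂ) - z^3*(d:ℂ) + z^3 + z*(c:ℂ)) * h15 + (- z^6*(c:ℂ) + z^6*(d:ℂ) + z^5*(d:ℂ) + z*(c:ℂ) - z*(d:ℂ) - (d:ℂ)) * hphi
    have hF3₂ : (Polynomial.aeval (z ^ 3)) (1 + X ^ 3 + X ^ 6 + X ^ 9 + X ^ 14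
          + (X - 1) * Phi5 * Phi15 * (Polynomial.C c * X + Polynomial.C d)) = (2*z^12 + z^9 + z^3 + 1) := by
      simp only [Phi5, Phi15, map_add, map_sub, map_mul, map_pow, map_one, aeval_X, aeval_C,
      algebraMap_int_eq, eq_intCast, map_intCast]
      linear_combination (z^27*(c:ℂ) + z^27 - z^24*(c:ℂ) + z^24*(d:ℂ) - z^21*(d:ℂ) + z^18*(c:ℂ) - z^15*(c:ℂ) + z^15*(d:ℂ) + z^12*(c:ℂ) - z^12*(d:ℂ) + 2*z^12 + z^9*(d:ℂ) - z^6*(c:ℂ) + z^3*(c:ℂ) - z^3*(d:ℂ) + z^3 + (d:ℂ)) * h15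
    have hF4₂ : (Polynomial.aeval (z ^ 4)) (1 + X ^ 3 + X ^ 6 + X ^ 9 + X ^ 14
          + (X - 1) * Phi5 * Phi15 * (Polynomial.C c * X + Polynomial.C d)) = (z^12 + z^11 + z^9 + z^6 + 1) := by
      simp only [Phi5, Phi15, map_add, map_sub, map_mul, map_pow, map_one, aeval_X, aeval_C,
      algebraMap_int_eq, eq_intCast, map_intCast]
      linear_combination (z^41*(c:ℂ) + z^41 - z^37*(c:ℂ) + z^37*(d:ℂ) - z^33*(d:ℂ) + z^29*(c:ℂ) + z^26*(c:ℂ) + z^26 - z^25*(c:ℂ) + z^25*(d:ℂ) - z^22*(c:ℂ) + z^22*(d:ℂ) - z^21*(d:ℂ) + z^21 - z^18*(d:ℂ) + z^17*(c:ℂ) + z^14*(c:ℂ) - z^13*(c:ℂ) + z^13*(d:ℂ) + z^11*(c:ℂ) + z^11 - z^10*(c:ℂ) + z^10*(d:ℂ) - z^9*(d:ℂ) + z^9 - z^7*(c:ℂ) + z^7*(d:ℂ) - z^6*(d:ℂ) + z^6 + z^5*(c:ℂ) - z^3*(d:ℂ) + z^2*(c:ℂ) - z*(c:ℂ) + z*(d:ℂ))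 * h15 + (z^6*(c:ℂ) + z^5*(d:ℂ) - z*(c:ℂ) - (d:ℂ)) * hphi
    have hF5₂ : (Polynomial.aeval (z ^ 5)) (1 + X ^ 3 + X ^ 6 + X ^ 9 + X ^ 14
          + (X - 1) * Phi5 * Phi15 * (Polynomial.C c * X + Polynomial.C d)) = (3 - z^5 + 5*(z^5 - 1)*((c:ℂ)*z^5 + (d:ℂ))) := by
      simp only [Phi5, Phi15, map_add, map_sub, map_mul, map_pow, map_one, aeval_X, aeval_C,
      algebraMap_int_eq, eq_intCast, map_intCast]
      linear_combination (z^55*(c:ℂ) + z^55 - z^50*(c:ℂ) + z^50*(d:ℂ) - z^45*(d:ℂ) + 2*z^40*(c:ℂ) + z^40 - 2*z^35*(c:ℂ) + 2*z^35*(d:ℂ) - 2*z^30*(d:ℂ) + z^30 + 3*z^25*(c:ℂ) + z^25 - 3*z^20*(c:ℂ) + 3*z^20*(d:ℂ) - 3*z^15*(d:ℂ) + 2*z^15 + 4*z^10*(c:ℂ) + z^10 - 4*z^5*(c:ℂ) + 4*z^5*(d:ℂ) - 4*(d:ℂ) + 3) * h15 + (1) * hw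
    have hF6₂ : (Polynomial.aeval (z ^ 6)) (1 + X ^ 3 + X ^ 6 + X ^ 9 + X ^ 14
          + (X - 1) * Phi5 * Phi15 * (Polynomial.C c * X + Polynomial.C d)) = (2*z^9 + z^6 + z^3 + 1) := by
      simp only [Phi5, Phi15, map_add, map_sub, map_mul, map_pow, map_one, aeval_X, aeval_C,
      algebraMap_int_eq, eq_intCast, map_intCast]
      linear_combination (z^69*(c:ℂ) + z^69 - z^63*(c:ℂ) + z^63*(d:ℂ) - z^57*(d:ℂ) + z^54*(c:ℂ) + z^54 + z^51*(c:ℂ) - z^48*(c:ℂ) + z^48*(d:ℂ) - z^45*(c:ℂ) + z^45*(d:ℂ) - z^42*(d:ℂ) + z^39*(c:ℂ) - z^39*(d:ℂ) + 2*z^39 + z^36*(c:ℂ) + z^33*(d:ℂ) - z^30*(c:ℂ) + z^30*(d:ℂ) - z^27*(c:ℂ) + z^24*(c:ℂ) - z^24*(d:ℂ) + 2*z^24 + z^21*(c:ℂ) - z^21*(d:ℂ) + z^21 + z^18*(d:ℂ) + z^15*(d:ℂ) - z^12*(c:ℂ) + 2*z^9 + z^6*(c:ℂ) - z^6*(d:ℂ)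 + z^6 + z^3 + (d:ℂ)) * h15
    have hF7₂ : (Polynomial.aeval (z ^ 7)) (1 + X ^ 3 + X ^ 6 + X ^ 9 + X ^ 14
          + (X - 1) * Phi5 * Phi15 * (Polynomial.C c * X + Polynomial.C d)) = (z^12 + z^8 + z^6 + z^3 + 1) := by
      simp only [Phi5, Phi15, map_add, map_sub, map_mul, map_pow, map_one, aeval_X, aeval_C,
      algebraMap_int_eq, eq_intCast, map_intCast]
      linear_combination (z^83*(c:ℂ) + z^83 - z^76*(c:ℂ) + z^76*(d:ℂ) - z^69*(d:ℂ) + z^68*(c:ℂ) + z^68 + z^62*(c:ℂ) - z^61*(c:ℂ) + z^61*(d:ℂ) - z^55*(c:ℂ) + z^55*(d:ℂ) - z^54*(d:ℂ) + z^53*(c:ℂ) + z^53 - z^48*(d:ℂ) + z^48 + z^47*(c:ℂ) - z^46*(c:ℂ) + z^46*(d:ℂ) + z^41*(c:ℂ) - z^40*(c:ℂ) + z^40*(d:ℂ) - z^39*(d:ℂ) + z^38*(c:ℂ) + z^38 - z^34*(c:ℂ) + z^34*(d:ℂ) - z^33*(d:ℂ) + z^33 + z^32*(c:ℂ) - z^31*(c:ℂ)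 + z^31*(d:ℂ) - z^27*(d:ℂ) + z^27 + z^26*(c:ℂ) - z^25*(c:ℂ) + z^25*(d:ℂ) - z^24*(d:ℂ) + z^23*(c:ℂ) + z^23 + z^20*(c:ℂ) - z^19*(c:ℂ) + z^19*(d:ℂ) - z^18*(d:ℂ) + z^18 + z^17*(c:ℂ) - z^16*(c:ℂ) + z^16*(d:ℂ) - z^13*(c:ℂ) + z^13*(d:ℂ) - z^12*(d:ℂ) + z^12 + z^11*(c:ℂ) - z^10*(c:ℂ) + z^10*(d:ℂ) - z^9*(d:ℂ) + z^8*(c:ℂ) + z^8 - z^6*(d:ℂ) + z^6 + z^5*(c:ℂ) - z^4*(c:ℂ) + z^4*(d:ℂ) - z^3*(d:ℂ) + z^3 + z^2*(c:ℂ) - z*(c:ℂ) + z*(d:ℂ)) * h15 + (z^6*(c:ℂ) + z^5*(d:ℂ) - z*(c:ℂ) - (d:ℂ)) * hphi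
    have hF8₂ : (Polynomial.aeval (z ^ 8)) (1 + X ^ 3 + X ^ 6 + X ^ 9 + X ^ 14
          + (X - 1) * Phi5 * Phi15 * (Polynomial.C c * X + Polynomial.C d)) = (z^12 + z^9 + z^7 + z^3 + 1) := by
      simp only [Phi5, Phi15, map_add, map_sub, map_mul, map_pow, map_one, aeval_X, aeval_C,
      algebraMap_int_eq, eq_intCast, map_intCast]
      linear_combination (z^97*(c:ℂ) + z^97 - z^89*(c:ℂ) + z^89*(d:ℂ) + z^82*(c:ℂ) + z^82 - z^81*(d:ℂ) - z^74*(c:ℂ) + z^74*(d:ℂ) + z^73*(c:ℂ) + z^67*(c:ℂ) + z^67 - z^66*(d:ℂ) - z^65*(c:ℂ) + z^65*(d:ℂ) - z^59*(c:ℂ) + z^59*(d:ℂ) + z^58*(c:ℂ) - z^57*(d:ℂ) + z^57 + z^52*(c:ℂ) + z^52 - z^51*(d:ℂ) - z^50*(c:ℂ) + z^50*(d:ℂ) + z^49*(c:ℂ) - z^44*(c:ℂ) + z^44*(d:ℂ) + z^43*(c:ℂ) - z^42*(d:ℂ) + z^42 - z^41*(c:ℂ) + z^41*(d:ℂ) +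 z^37*(c:ℂ) + z^37 - z^36*(d:ℂ) - z^35*(c:ℂ) + z^35*(d:ℂ) + z^34*(c:ℂ) - z^33*(d:ℂ) + z^33 - z^29*(c:ℂ) + z^29*(d:ℂ) + z^28*(c:ℂ) - z^27*(d:ℂ) + z^27 - z^26*(c:ℂ) + z^26*(d:ℂ) + z^25*(c:ℂ) + z^22*(c:ℂ) + z^22 - z^21*(d:ℂ) - z^20*(c:ℂ) + z^20*(d:ℂ) + z^19*(c:ℂ) - z^18*(d:ℂ) + z^18 - z^17*(c:ℂ) + z^17*(d:ℂ) - z^14*(c:ℂ) + z^14*(d:ℂ) + z^13*(c:ℂ) - z^12*(d:ℂ) + z^12 - z^11*(c:ℂ) + z^11*(d:ℂ) + z^10*(c:ℂ) - z^9*(d:ℂ) + z^9 + z^7*(c:ℂ) + z^7 - z^6*(d:ℂ) - z^5*(c:ℂ) + z^5*(d:ℂ) + z^4*(c:ℂ) - z^3*(d:ℂ) + z^3 - z^2*(c:ℂ) + z^2*(d:ℂ) + z*(c:ℂ)) * h15 + (- z^6*(c:ℂ) + z^6*(d:ℂ) + z^5*(d:ℂ) + z*(c:ℂ) - z*(d:ℂ)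 - (d:ℂ)) * hphi
    have hF9₂ : (Polynomial.aeval (z ^ 9)) (1 + X ^ 3 + X ^ 6 + X ^ 9 + X ^ 14
          + (X - 1) * Phi5 * Phi15 * (Polynomial.C c * X + Polynomial.C d)) = (z^12 + z^9 + 2*z^6 + 1) := by
      simp only [Phi5, Phi15, map_add, map_sub, map_mul, map_pow, map_one, aeval_X, aeval_C,
      algebraMap_int_eq, eq_intCast, map_intCast]
      linear_combination (z^111*(c:ℂ) + z^111 - z^102*(c:ℂ) + z^102*(d:ℂ) + z^96*(c:ℂ) + z^96 - z^93*(d:ℂ) - z^87*(c:ℂ) + z^87*(d:ℂ) + z^84*(c:ℂ) + z^81*(c:ℂ) + z^81 - z^78*(d:ℂ) - z^75*(c:ℂ) + z^75*(d:ℂ) - z^72*(c:ℂ) + z^72*(d:ℂ) + z^69*(c:ℂ) + z^66*(c:ℂ) - z^66*(d:ℂ) + 2*z^66 - z^63*(d:ℂ) - z^60*(c:ℂ) + z^60*(d:ℂ) + z^57*(d:ℂ) + z^54*(c:ℂ) + z^51*(c:ℂ) - z^51*(d:ℂ) + 2*z^51 - z^48*(c:ℂ) - z^45*(c:ℂ)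 + z^45*(d:ℂ) + z^42*(d:ℂ) + z^39*(c:ℂ) - z^39*(d:ℂ) + z^39 + z^36*(c:ℂ) - z^36*(d:ℂ) + 2*z^36 - z^33*(c:ℂ) + z^30*(d:ℂ) + z^27*(d:ℂ) + z^24*(c:ℂ) - z^24*(d:ℂ) + z^24 + 2*z^21 - z^18*(c:ℂ) + z^15*(d:ℂ) + z^12 + z^9*(c:ℂ) - z^9*(d:ℂ) + z^9 + 2*z^6 + (d:ℂ)) * h15
    have hF10₂ : (Polynomial.aeval (z ^ 10)) (1 + X ^ 3 + X ^ 6 + X ^ 9 + X ^ 14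
          + (X - 1) * Phi5 * Phi15 * (Polynomial.C c * X + Polynomial.C d)) = (3 - z^10 + 5*(z^10 - 1)*((c:ℂ)*z^10 + (d:ℂ))) := by
      simp only [Phi5, Phi15, map_add, map_sub, map_mul, map_pow, map_one, aeval_X, aeval_C,
      algebraMap_int_eq, eq_intCast, map_intCast]
      linear_combination (z^125*(c:ℂ) + z^125 - z^115*(c:ℂ) + z^115*(d:ℂ) + z^110*(c:ℂ) + z^110 - z^105*(d:ℂ) - z^100*(c:ℂ) + z^100*(d:ℂ) + 2*z^95*(c:ℂ) + z^95 - z^90*(d:ℂ) - 2*z^85*(c:ℂ) + 2*z^85*(d:ℂ) + 2*z^80*(c:ℂ) + z^80 - 2*z^75*(d:ℂ) + z^75 - 2*z^70*(c:ℂ) + 2*z^70*(d:ℂ) + 3*z^65*(c:ℂ) + z^65 - 2*z^60*(d:ℂ) + z^60 - 3*z^55*(c:ℂ) + 3*z^55*(d:ℂ) + 3*z^50*(c:ℂ) + z^50 - 3*z^45*(d:ℂ) + 2*z^45 - 3*z^40*(c:ℂ) + 3*z^40*(d:ℂ) + 4*z^35*(c:ℂ) + z^35 - 3*z^30*(d:ℂ)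 + 2*z^30 - 4*z^25*(c:ℂ) + 4*z^25*(d:ℂ) + 4*z^20*(c:ℂ) + z^20 - 4*z^15*(d:ℂ) + 3*z^15 - 4*z^10*(c:ℂ) + 4*z^10*(d:ℂ) + z^5 - 4*(d:ℂ) + 3) * h15 + (1) * hw
    have hF11₂ : (Polynomial.aeval (z ^ 11)) (1 + X ^ 3 + X ^ 6 + X ^ 9 + X ^ 14
          + (X - 1) * Phi5 * Phi15 * (Polynomial.C c * X + Polynomial.C d)) = (z^9 + z^6 + z^4 + z^3 + 1) := by
      simp only [Phi5, Phi15, map_add, map_sub, map_mul, map_pow, map_one, aeval_X, aeval_C,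
      algebraMap_int_eq, eq_intCast, map_intCast]
      linear_combination (z^139*(c:ℂ) + z^139 - z^128*(c:ℂ) + z^128*(d:ℂ) + z^124*(c:ℂ) + z^124 - z^117*(d:ℂ) - z^113*(c:ℂ) + z^113*(d:ℂ) + z^109*(c:ℂ) + z^109 + z^106*(c:ℂ) - z^102*(d:ℂ) - z^98*(c:ℂ) + z^98*(d:ℂ) - z^95*(c:ℂ) + z^95*(d:ℂ) + z^94*(c:ℂ) + z^94 + z^91*(c:ℂ) - z^87*(d:ℂ) - z^84*(d:ℂ) + z^84 - z^83*(c:ℂ) + z^83*(d:ℂ) - z^80*(c:ℂ) + z^80*(d:ℂ) + z^79*(c:ℂ) + z^79 + z^76*(c:ℂ) + z^73*(c:ℂ) - z^72*(d:ℂ) - z^69*(d:ℂ) + z^69 - z^68*(c:ℂ) + z^68*(d:ℂ) - z^65*(c:ℂ) + z^65*(d:ℂ) + z^64*(c:ℂ) + z^64 - z^62*(c:ℂ) + z^62*(d:ℂ) + z^61*(c:ℂ) + z^58*(c:ℂ) - z^57*(d:ℂ) - z^54*(d:ℂ) + z^54 - z^53*(c:ℂ) + z^53*(d:ℂ) - z^51*(d:ℂ)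 + z^51 - z^50*(c:ℂ) + z^50*(d:ℂ) + z^49*(c:ℂ) + z^49 - z^47*(c:ℂ) + z^47*(d:ℂ) + z^46*(c:ℂ) + z^43*(c:ℂ) - z^42*(d:ℂ) + z^40*(c:ℂ) - z^39*(d:ℂ) + z^39 - z^38*(c:ℂ) + z^38*(d:ℂ) - z^36*(d:ℂ) + z^36 - z^35*(c:ℂ) + z^35*(d:ℂ) + z^34*(c:ℂ) + z^34 - z^32*(c:ℂ) + z^32*(d:ℂ) + z^31*(c:ℂ) - z^29*(c:ℂ) + z^29*(d:ℂ) + z^28*(c:ℂ) - z^27*(d:ℂ) + z^25*(c:ℂ) - z^24*(d:ℂ) + z^24 - z^23*(c:ℂ) + z^23*(d:ℂ) - z^21*(d:ℂ) + z^21 - z^20*(c:ℂ) + z^20*(d:ℂ) + z^19*(c:ℂ) + z^19 - z^18*(d:ℂ) + z^18 - z^17*(c:ℂ) + z^17*(d:ℂ) + z^16*(c:ℂ) - z^14*(c:ℂ) + z^14*(d:ℂ) + z^13*(c:ℂ) - z^12*(d:ℂ) + z^10*(c:ℂ) - z^9*(d:ℂ) + z^9 - z^8*(c:ℂ) + z^8*(d:ℂ)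 + z^7*(c:ℂ) - z^6*(d:ℂ) + z^6 - z^5*(c:ℂ) + z^5*(d:ℂ) + z^4*(c:ℂ) + z^4 - z^3*(d:ℂ) + z^3 - z^2*(c:ℂ) + z^2*(d:ℂ) + z*(c:ℂ)) * h15 + (- z^6*(c:ℂ) + z^6*(d:ℂ) + z^5*(d:ℂ) + z*(c:ℂ) - z*(d:ℂ) - (d:ℂ)) * hphi
    have hF12₂ : (Polynomial.aeval (z ^ 12)) (1 + X ^ 3 + X ^ 6 + X ^ 9 + X ^ 14
          + (X - 1) * Phi5 * Phi15 * (Polynomial.C c * X + Polynomial.C d)) = (z^12 + z^6 + 2*z^3 + 1) := by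
      simp only [Phi5, Phi15, map_add, map_sub, map_mul, map_pow, map_one, aeval_X, aeval_C,
      algebraMap_int_eq, eq_intCast, map_intCast]
      linear_combination (z^153*(c:ℂ) + z^153 - z^141*(c:ℂ) + z^141*(d:ℂ) + z^138*(c:ℂ) + z^138 - z^129*(d:ℂ) - z^126*(c:ℂ) + z^126*(d:ℂ) + z^123*(c:ℂ) + z^123 + z^117*(c:ℂ) - z^114*(d:ℂ) - z^111*(c:ℂ) + z^111*(d:ℂ) + z^108*(c:ℂ) + z^108 - z^105*(c:ℂ) + z^105*(d:ℂ) + z^102*(c:ℂ) - z^99*(d:ℂ) - z^96*(c:ℂ) + z^96*(d:ℂ) + z^93*(c:ℂ) - z^93*(d:ℂ) + 2*z^93 - z^90*(c:ℂ) + z^90*(d:ℂ) + z^87*(c:ℂ) - z^84*(d:ℂ) + z^81*(d:ℂ) + z^78*(c:ℂ) - z^78*(d:ℂ) + 2*z^78 - z^75*(c:ℂ) + z^75*(d:ℂ) + z^72*(c:ℂ) - z^69*(c:ℂ) + z^66*(d:ℂ) + z^63*(c:ℂ) - z^63*(d:ℂ) + 2*z^63 - z^60*(c:ℂ) + z^60*(d:ℂ)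 + z^57*(c:ℂ) - z^57*(d:ℂ) + z^57 - z^54*(c:ℂ) + z^51*(d:ℂ) + z^48*(c:ℂ) - z^48*(d:ℂ) + 2*z^48 + z^45*(d:ℂ) + z^42*(c:ℂ) - z^42*(d:ℂ) + z^42 - z^39*(c:ℂ) + z^36*(d:ℂ) + 2*z^33 + z^30*(d:ℂ) + z^27*(c:ℂ) - z^27*(d:ℂ) + z^27 - z^24*(c:ℂ) + z^21 + 2*z^18 + z^15*(d:ℂ) + z^12*(c:ℂ) - z^12*(d:ℂ) + z^12 + z^6 + 2*z^3 + (d:ℂ)) * h15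
    have hF13₂ : (Polynomial.aeval (z ^ 13)) (1 + X ^ 3 + X ^ 6 + X ^ 9 + X ^ 14
          + (X - 1) * Phi5 * Phi15 * (Polynomial.C c * X + Polynomial.C d)) = (z^12 + z^9 + z^3 + z^2 + 1) := by
      simp only [Phi5, Phi15, map_add, map_sub, map_mul, map_pow, map_one, aeval_X, aeval_C,
      algebraMap_int_eq, eq_intCast, map_intCast]
      linear_combination (z^167*(c:ℂ) + z^167 - z^154*(c:ℂ) + z^154*(d:ℂ) + z^152*(c:ℂ) + z^152 - z^141*(d:ℂ) - z^139*(c:ℂ) + z^139*(d:ℂ) + z^137*(c:ℂ) + z^137 + z^128*(c:ℂ) - z^126*(d:ℂ) - z^124*(c:ℂ) + z^124*(d:ℂ) + z^122*(c:ℂ) + z^122 - z^115*(c:ℂ) + z^115*(d:ℂ) + z^113*(c:ℂ) - z^111*(d:ℂ) - z^109*(c:ℂ) + z^109*(d:ℂ) + z^107*(c:ℂ) + z^107 - z^102*(d:ℂ) + z^102 - z^100*(c:ℂ) + z^100*(d:ℂ) + z^98*(c:ℂ) - z^96*(d:ℂ) - z^94*(c:ℂ) + z^94*(d:ℂ) +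 z^92*(c:ℂ) + z^92 + z^89*(c:ℂ) - z^87*(d:ℂ) + z^87 - z^85*(c:ℂ) + z^85*(d:ℂ) + z^83*(c:ℂ) - z^81*(d:ℂ) - z^79*(c:ℂ) + z^79*(d:ℂ) + z^77*(c:ℂ) + z^77 - z^76*(c:ℂ) + z^76*(d:ℂ) + z^74*(c:ℂ) - z^72*(d:ℂ) + z^72 - z^70*(c:ℂ) + z^70*(d:ℂ) + z^68*(c:ℂ) - z^66*(d:ℂ) - z^64*(c:ℂ) + z^64*(d:ℂ) - z^63*(d:ℂ) + z^63 + z^62*(c:ℂ) + z^62 - z^61*(c:ℂ) + z^61*(d:ℂ) + z^59*(c:ℂ) - z^57*(d:ℂ) + z^57 - z^55*(c:ℂ) + z^55*(d:ℂ) + z^53*(c:ℂ) - z^51*(d:ℂ) + z^50*(c:ℂ) - z^49*(c:ℂ) + z^49*(d:ℂ) - z^48*(d:ℂ) + z^48 + z^47*(c:ℂ) + z^47 - z^46*(c:ℂ) + z^46*(d:ℂ) + z^44*(c:ℂ) - z^42*(d:ℂ) + z^42 - z^40*(c:ℂ) + z^40*(d:ℂ) + z^38*(c:ℂ) - z^37*(c:ℂ)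 + z^37*(d:ℂ) - z^36*(d:ℂ) + z^35*(c:ℂ) - z^34*(c:ℂ) + z^34*(d:ℂ) - z^33*(d:ℂ) + z^33 + z^32*(c:ℂ) + z^32 - z^31*(c:ℂ) + z^31*(d:ℂ) + z^29*(c:ℂ) - z^27*(d:ℂ) + z^27 - z^25*(c:ℂ) + z^25*(d:ℂ) - z^24*(d:ℂ) + z^24 + z^23*(c:ℂ) - z^22*(c:ℂ) + z^22*(d:ℂ) - z^21*(d:ℂ) + z^20*(c:ℂ) - z^19*(c:ℂ) + z^19*(d:ℂ) - z^18*(d:ℂ) + z^18 + z^17*(c:ℂ) + z^17 - z^16*(c:ℂ) + z^16*(d:ℂ) + z^14*(c:ℂ) - z^12*(d:ℂ) + z^12 + z^11*(c:ℂ) - z^10*(c:ℂ) + z^10*(d:ℂ) - z^9*(d:ℂ) + z^9 + z^8*(c:ℂ) - z^7*(c:ℂ) + z^7*(d:ℂ) - z^6*(d:ℂ) + z^5*(c:ℂ) - z^4*(c:ℂ) + z^4*(d:ℂ) - z^3*(d:ℂ) + z^3 + z^2*(c:ℂ) + z^2 - z*(c:ℂ) + z*(d:ℂ)) * h15 + (z^6*(c:ℂ)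 + z^5*(d:ℂ) - z*(c:ℂ) - (d:ℂ)) * hphi
    have hF14₂ : (Polynomial.aeval (z ^ 14)) (1 + X ^ 3 + X ^ 6 + X ^ 9 + X ^ 14
          + (X - 1) * Phi5 * Phi15 * (Polynomial.C c * X + Polynomial.C d)) = (z^12 + z^9 + z^6 + z + 1) := by
      simp only [Phi5, Phi15, map_add, map_sub, map_mul, map_pow, map_one, aeval_X, aeval_C,
      algebraMap_int_eq, eq_intCast, map_intCast]
      linear_combination (z^181*(c:ℂ) + z^181 - z^167*(c:ℂ) + z^167*(d:ℂ) + z^166*(c:ℂ) + z^166 - z^153*(d:ℂ) - z^152*(c:ℂ) + z^152*(d:ℂ) + z^151*(c:ℂ) + z^151 + z^139*(c:ℂ) - z^138*(d:ℂ) - z^137*(c:ℂ) + z^137*(d:ℂ) + z^136*(c:ℂ) + z^136 - z^125*(c:ℂ) + z^125*(d:ℂ) + z^124*(c:ℂ) - z^123*(d:ℂ) - z^122*(c:ℂ) + z^122*(d:ℂ) + z^121*(c:ℂ) + z^121 - z^111*(d:ℂ) + z^111 - z^110*(c:ℂ) + z^110*(d:ℂ) + z^109*(c:ℂ) - z^108*(d:ℂ)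 - z^107*(c:ℂ) + z^107*(d:ℂ) + z^106*(c:ℂ) + z^106 + z^97*(c:ℂ) - z^96*(d:ℂ) + z^96 - z^95*(c:ℂ) + z^95*(d:ℂ) + z^94*(c:ℂ) - z^93*(d:ℂ) - z^92*(c:ℂ) + z^92*(d:ℂ) + z^91*(c:ℂ) + z^91 - z^83*(c:ℂ) + z^83*(d:ℂ) + z^82*(c:ℂ) - z^81*(d:ℂ) + z^81 - z^80*(c:ℂ) + z^80*(d:ℂ) + z^79*(c:ℂ) - z^78*(d:ℂ) - z^77*(c:ℂ) + z^77*(d:ℂ) + z^76*(c:ℂ) + z^76 - z^69*(d:ℂ) + z^69 - z^68*(c:ℂ) + z^68*(d:ℂ) + z^67*(c:ℂ) - z^66*(d:ℂ) + z^66 - z^65*(c:ℂ) + z^65*(d:ℂ) + z^64*(c:ℂ) - z^63*(d:ℂ) - z^62*(c:ℂ) + z^62*(d:ℂ) + z^61*(c:ℂ) + z^61 + z^55*(c:ℂ) - z^54*(d:ℂ) + z^54 - z^53*(c:ℂ) + z^53*(d:ℂ) + z^52*(c:ℂ) - z^51*(d:ℂ) + z^51 - z^50*(c:ℂ) + z^50*(d:ℂ)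 + z^49*(c:ℂ) - z^48*(d:ℂ) - z^47*(c:ℂ) + z^47*(d:ℂ) + z^46*(c:ℂ) + z^46 - z^41*(c:ℂ) + z^41*(d:ℂ) + z^40*(c:ℂ) - z^39*(d:ℂ) + z^39 - z^38*(c:ℂ) + z^38*(d:ℂ) + z^37*(c:ℂ) - z^36*(d:ℂ) + z^36 - z^35*(c:ℂ) + z^35*(d:ℂ) + z^34*(c:ℂ) - z^33*(d:ℂ) - z^32*(c:ℂ) + z^32*(d:ℂ) + z^31*(c:ℂ) + z^31 - z^27*(d:ℂ) + z^27 - z^26*(c:ℂ) + z^26*(d:ℂ) + z^25*(c:ℂ) - z^24*(d:ℂ) + z^24 - z^23*(c:ℂ) + z^23*(d:ℂ) + z^22*(c:ℂ) - z^21*(d:ℂ) + z^21 - z^20*(c:ℂ) + z^20*(d:ℂ) + z^19*(c:ℂ) - z^18*(d:ℂ) - z^17*(c:ℂ) + z^17*(d:ℂ) + z^16*(c:ℂ) + z^16 + z^13*(c:ℂ) - z^12*(d:ℂ) + z^12 - z^11*(c:ℂ) + z^11*(d:ℂ) + z^10*(c:ℂ) - z^9*(d:ℂ) + z^9 - z^8*(c:ℂ)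 + z^8*(d:ℂ) + z^7*(c:ℂ) - z^6*(d:ℂ) + z^6 - z^5*(c:ℂ) + z^5*(d:ℂ) + z^4*(c:ℂ) - z^3*(d:ℂ) - z^2*(c:ℂ) + z^2*(d:ℂ) + z*(c:ℂ) + z) * h15 + (- z^6*(c:ℂ) + z^6*(d:ℂ) + z^5*(d:ℂ) + z*(c:ℂ) - z*(d:ℂ) - (d:ℂ)) * hphi
    rw [Nnorm, hfilt, show ({1,2} : Finset ℕ) = insert 1 {2} from rfl,
      Finset.prod_insert (by decide), Finset.prod_singleton, eq3 1, eq3 2] at hN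
    simp only [Phi5, Phi15, map_add, map_sub, map_mul, map_pow, map_one, aeval_X, aeval_C,
      algebraMap_int_eq, eq_intCast, map_intCast, Nat.cast_ofNat, Nat.cast_one] at hN
    have hG₂ : (3 - z^5 + 5*(z^5 - 1)*((c:ℂ)*z^5 + (d:ℂ))) * (3 - z^10 + 5*(z^10 - 1)*((c:ℂ)*z^10 + (d:ℂ))) = (p:ℂ) := by linear_combination hN
    have hW1₂ : 5 * (z^14 + z^9 + z^6 + z^3 + 1) = (5*z^14 + 5*z^9 + 5*z^6 + 5*z^3 + 5) := by
      linear_combination (0:ℂ) * h15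
    have hW2₂ : (5*z^14 + 5*z^9 + 5*z^6 + 5*z^3 + 5) * (z^13 + z^12 + z^6 + z^3 + 1) = (5*z^14 + 5*z^13 + 20*z^12 + 5*z^11 + 15*z^9 + 5*z^7 + 20*z^6 + 5*z^5 + 5*z^4 + 15*z^3 + 5*z^2 + 5*z + 15) := by
      linear_combination (5*z^12 + 5*z^11 + 5*z^7 + 5*z^6 + 5*z^5 + 5*z^4 + 5*z^3 + 5*z^2 + 5*z + 10) * h15
    have hW3₂ : (5*z^14 + 5*z^13 + 20*z^12 + 5*z^11 + 15*z^9 + 5*z^7 + 20*z^6 + 5*z^5 + 5*z^4 + 15*z^3 + 5*z^2 + 5*z + 15) * (2*z^12 + z^9 + z^3 + 1) = (25*z^14 + 20*z^13 + 80*z^12 + 20*z^11 + 20*z^10 + 90*z^9 + 20*z^8 + 15*z^7 + 85*z^6 + 15*z^5 + 20*z^4 + 85*z^3 + 20*z^2 + 25*z + 85) := by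
      linear_combination (10*z^11 + 10*z^10 + 40*z^9 + 15*z^8 + 5*z^7 + 50*z^6 + 5*z^5 + 10*z^4 + 55*z^3 + 15*z^2 + 20*z + 70) * h15
    have hW4₂ : (25*z^14 + 20*z^13 + 80*z^12 + 20*z^11 + 20*z^10 + 90*z^9 + 20*z^8 + 15*z^7 + 85*z^6 + 15*z^5 + 20*z^4 + 85*z^3 + 20*z^2 + 25*z + 85) * (z^12 + z^11 + z^9 + z^6 + 1) = (165*z^14 + 100*z^13 + 360*z^12 + 165*z^11 + 110*z^10 + 360*z^9 + 165*z^8 + 100*z^7 + 360*z^6 + 170*z^5 + 95*z^4 + 355*z^3 + 160*z^2 + 95*z + 365) := by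
      linear_combination (25*z^11 + 45*z^10 + 100*z^9 + 125*z^8 + 60*z^7 + 190*z^6 + 155*z^5 + 75*z^4 + 270*z^3 + 140*z^2 + 70*z + 280) * h15
    have hW5₂ : (165*z^14 + 100*z^13 + 360*z^12 + 165*z^11 + 110*z^10 + 360*z^9 + 165*z^8 + 100*z^7 + 360*z^6 + 170*z^5 + 95*z^4 + 355*z^3 + 160*z^2 + 95*z + 365) * (2*z^9 + z^6 + z^3 + 1) = (835*z^14 + 500*z^13 + 1790*z^12 + 820*z^11 + 495*z^10 + 1805*z^9 + 825*z^8 + 490*z^7 + 1800*z^6 + 825*z^5 + 510*z^4 + 1800*z^3 + 820*z^2 + 505*z + 1805) := by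
      linear_combination (330*z^8 + 200*z^7 + 720*z^6 + 495*z^5 + 320*z^4 + 1080*z^3 + 660*z^2 + 410*z + 1440) * h15
    have hW6₂ : (835*z^14 + 500*z^13 + 1790*z^12 + 820*z^11 + 495*z^10 + 1805*z^9 + 825*z^8 + 490*z^7 + 1800*z^6 + 825*z^5 + 510*z^4 + 1800*z^3 + 820*z^2 + 505*z + 1805) * (z^12 + z^8 + z^6 + z^3 + 1) = (5100*z^14 + 2815*z^13 + 7710*z^12 + 5105*z^11 + 2815*z^10 + 7700*z^9 + 5095*z^8 + 2835*z^7 + 7710*z^6 + 5095*z^5 + 2825*z^4 + 7690*z^3 + 5105*z^2 + 2835*z + 7690) := by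
      linear_combination (835*z^11 + 500*z^10 + 1790*z^9 + 820*z^8 + 1330*z^7 + 2305*z^6 + 3450*z^5 + 1810*z^4 + 4085*z^3 + 4285*z^2 + 2330*z + 5885) * h15
    have hW7₂ : (5100*z^14 + 2815*z^13 + 7710*z^12 + 5105*z^11 + 2815*z^10 + 7700*z^9 + 5095*z^8 + 2835*z^7 + 7710*z^6 + 5095*z^5 + 2825*z^4 + 7690*z^3 + 5105*z^2 + 2835*z + 7690) * (z^12 + z^9 + z^7 + z^3 + 1) = (23240*z^14 + 19000*z^13 + 35885*z^12 + 23230*z^11 + 18990*z^10 + 35915*z^9 + 23230*z^8 + 18980*z^7 + 35910*z^6 + 23215*z^5 + 19020*z^4 + 35895*z^3 + 23210*z^2 + 19010*z + 35895) := by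
      linear_combination (5100*z^11 + 2815*z^10 + 7710*z^9 + 10205*z^8 + 5630*z^7 + 20510*z^6 + 13015*z^5 + 13360*z^4 + 20515*z^3 + 18105*z^2 + 16175*z + 28205) * h15
    have hW8₂ : (23240*z^14 + 19000*z^13 + 35885*z^12 + 23230*z^11 + 18990*z^10 + 35915*z^9 + 23230*z^8 + 18980*z^7 + 35910*z^6 + 23215*z^5 + 19020*z^4 + 35895*z^3 + 23210*z^2 + 19010*z + 35895) * (z^12 + z^9 + 2*z^6 + 1) = (116125*z^14 + 94990*z^13 + 179495*z^12 + 116110*z^11 + 95040*z^10 + 179485*z^9 + 116120*z^8 + 94990*z^7 + 179500*z^6 + 116155*z^5 + 94990*z^4 + 179490*z^3 + 116115*z^2 + 94990*z + 179530) := by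
      linear_combination (23240*z^11 + 19000*z^10 + 35885*z^9 + 46470*z^8 + 37990*z^7 + 71800*z^6 + 92940*z^5 + 75970*z^4 + 143595*z^3 + 92905*z^2 + 75980*z + 143635) * h15
    have hW9₂ : (116125*z^14 + 94990*z^13 + 179495*z^12 + 116110*z^11 + 95040*z^10 + 179485*z^9 + 116120*z^8 + 94990*z^7 + 179500*z^6 + 116155*z^5 + 94990*z^4 + 179490*z^3 + 116115*z^2 + 94990*z + 179530) * (z^9 + z^6 + z^4 + z^3 + 1) = (559550*z^14 + 559495*z^13 + 834090*z^12 + 559490*z^11 + 559510*z^10 + 834160*z^9 + 559505*z^8 + 559450*z^7 + 834130*z^6 + 559495*z^5 + 559540*z^4 + 834125*z^3 + 559460*z^2 + 559505*z + 834120) := by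
      linear_combination (116125*z^8 + 94990*z^7 + 179495*z^6 + 232235*z^5 + 190030*z^4 + 475105*z^3 + 443345*z^2 + 464515*z + 654590) * h15
    have hW10₂ : (559550*z^14 + 559495*z^13 + 834090*z^12 + 559490*z^11 + 559510*z^10 + 834160*z^9 + 559505*z^8 + 559450*z^7 + 834130*z^6 + 559495*z^5 + 559540*z^4 + 834125*z^3 + 559460*z^2 + 559505*z + 834120) * (z^12 + z^6 + 2*z^3 + 1) = (2797495*z^14 + 2797470*z^13 + 4170660*z^12 + 2797545*z^11 + 2797445*z^10 + 4170635*z^9 + 2797445*z^8 + 2797545*z^7 + 4170660*z^6 + 2797470*z^5 + 2797495*z^4 + 4170585*z^3 + 2797545*z^2 + 2797545*z + 4170585) := by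
      linear_combination (559550*z^11 + 559495*z^10 + 834090*z^9 + 559490*z^8 + 559510*z^7 + 834160*z^6 + 1119055*z^5 + 1118945*z^4 + 1668220*z^3 + 2238085*z^2 + 2238040*z + 3336465) * h15
    have hW11₂ : (2797495*z^14 + 2797470*z^13 + 4170660*z^12 + 2797545*z^11 + 2797445*z^10 + 4170635*z^9 + 2797445*z^8 + 2797545*z^7 + 4170660*z^6 + 2797470*z^5 + 2797495*z^4 + 4170585*z^3 + 2797545*z^2 + 2797545*z + 4170585) * (z^12 + z^9 + z^3 + z^2 + 1) = (15360715*z^14 + 13987500*z^13 + 19479910*z^12 + 15360665*z^11 + 13987450*z^10 + 19480085*z^9 + 15360615*z^8 + 13987425*z^7 + 19480035*z^6 + 15360590*z^5 + 13987575*z^4 + 19480010*z^3 + 15360540*z^2 + 13987550*z + 19479960) := by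
      linear_combination (2797495*z^11 + 2797470*z^10 + 4170660*z^9 + 5595040*z^8 + 5594915*z^7 + 8341295*z^6 + 5594990*z^5 + 5594990*z^4 + 8341295*z^3 + 8392410*z^2 + 11190005*z + 15309375) * h15
    have hW12₂ : (15360715*z^14 + 13987500*z^13 + 19479910*z^12 + 15360665*z^11 + 13987450*z^10 + 19480085*z^9 + 15360615*z^8 + 13987425*z^7 + 19480035*z^6 + 15360590*z^5 + 13987575*z^4 + 19480010*z^3 + 15360540*z^2 + 13987550*z + 19479960) * (z^12 + z^9 + z^6 + z + 1) = (75429960*z^14 + 75429960*z^13 + 93280580*z^12 + 75429960*z^11 + 75430160*z^10 + 93280580*z^9 + 75429960*z^8 + 75429960*z^7 + 93280580*z^6 + 75430160*z^5 + 75429960*z^4 + 93280580*z^3 + 75429960*z^2 + 75429960*z + 93280805) := by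
      linear_combination (15360715*z^11 + 13987500*z^10 + 19479910*z^9 + 30721380*z^8 + 27974950*z^7 + 38959995*z^6 + 46081995*z^5 + 41962375*z^4 + 58440030*z^3 + 46081870*z^2 + 41962450*z + 73800845) * h15
    have hfin₂ : (75429960*z^14 + 75429960*z^13 + 93280580*z^12 + 75429960*z^11 + 75430160*z^10 + 93280580*z^9 + 75429960*z^8 + 75429960*z^7 + 93280580*z^6 + 75430160*z^5 + 75429960*z^4 + 93280580*z^3 + 75429960*z^2 + 75429960*z + 93280805) * (3 - z^5 + 5*(z^5 - 1)*((c:ℂ)*z^5 + (d:ℂ))) * (3 - z^10 + 5*(z^10 - 1)*((c:ℂ)*z^10 + (d:ℂ))) = 25 * (p:ℂ) := by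
      linear_combination ((75429960*z^6 + 150859920*z^5 + 244140500*z^4 + 244140500*z^3 + 244140700*z^2 + 168710740*z + 93280780) * ((3 - z^5 + 5*(z^5 - 1)*((c:ℂ)*z^5 + (d:ℂ))) * (3 - z^10 + 5*(z^10 - 1)*((c:ℂ)*z^10 + (d:ℂ))))) * hphi + 25 * hG₂
    have hM₂ : Mnorm 15 (1 + X ^ 3 + X ^ 6 + X ^ 9 + X ^ 14
          + (X - 1) * Phi5 * Phi15 * (Polynomial.C c * X + Polynomial.C d)) = ∏ j ∈ Finset.range 15, (Polynomial.aeval (z ^ j)) (1 + X ^ 3 + X ^ 6 + X ^ 9 + X ^ 14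
          + (X - 1) * Phi5 * Phi15 * (Polynomial.C c * X + Polynomial.C d)) :=
      Finset.prod_congr rfl (fun j _ => by rw [eq1 j])
    rw [hM₂, expand]
    simp only [hF0₂, hF1₂, hF2₂, hF3₂, hF4₂, hF5₂, hF6₂, hF7₂, hF8₂, hF9₂, hF10₂, hF11₂, hF12₂, hF13₂, hF14₂]
    rw [hW1₂, hW2₂, hW3₂, hW4₂, hW5₂, hW6₂, hW7₂, hW8₂, hW9₂, hW10₂, hW11₂, hW12₂]
    exact hfin₂
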